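/- arXiv:2502.01917 — 5 statements merged into one kernel-verified Lean document; each statement's English description precedes it below -/
import Mathlib

section
/- Let a, b ∈ ℤ₊ⁿ with a ≥_σ b. The 2×n semi-standard tableau [a; b] is standard if and only if a = b, or there exists k ∈ [n] with a_i = b_i for all i < k, a_k < b_k, and a_j ≥ b_j for all k < j ≤ n. -/
open Finset

/-- `a >_σ b`: the first index where `a` and `b` differ has `a k < b k`. -/
def sigmaGT {n : ℕ} (a b : Fin n → ℕ+) : Prop :=
  ∃ k : Fin n, (∀ i : Fin n, i < k → a i = b i) ∧ a k < b k

/-- `a ≥_σ b`. -/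
def sigmaGE {n : ℕ} (a b : Fin n → ℕ+) : Prop :=
  a = b ∨ sigmaGT a b

/-- A `p × n` tableau (rows in `ℤ₊ⁿ`) is semi-standard if its rows weakly decrease under `σ`. -/
def SemiStandard {p n : ℕ} (A : Fin p → Fin n → ℕ+) : Prop :=
  ∀ i j : Fin p, i ≤ j → sigmaGE (A i) (A j)

/-- `suppEq A B`: every column of `A` equals the corresponding column of `B` as a multiset. -/
def suppEq {p n : ℕ} (A B : Fin p → Fin n → ℕ+) : Prop :=
  ∀ j : Fin n, Multiset.map (fun i => A i j) Finset.univ.val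
    = Multiset.map (fun i => B i j) Finset.univ.val

/-- Row-wise lexicographic comparison of tableaux under `σ`: `A >_σ B`. -/
def tabGT {p n : ℕ} (A B : Fin p → Fin n → ℕ+) : Prop :=
  ∃ k : Fin p, (∀ i : Fin p, i < k → A i = B i) ∧ sigmaGT (A k) (B k)

/-- A semi-standard tableau is standard if it is `σ`-minimal among all semi-standard
tableaux with the same column supports. -/
def IsStandard {p n : ℕ} (A : Fin p → Fin n → ℕ+) : Prop :=
  SemiStandard A ∧ ∀ B : Fin p → Fin n → ℕ+,
    SemiStandard B → suppEq B A → B ≠ A → tabGT B A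

/-- An `n`-dimensional Ferrers diagram: a nonempty finite down-closed subset of `ℤ₊ⁿ`. -/
def IsFerrers {n : ℕ} (D : Set (Fin n → ℕ+)) : Prop :=
  D.Nonempty ∧ D.Finite ∧ ∀ b ∈ D, ∀ a : Fin n → ℕ+, (∀ i, a i ≤ b i) → a ∈ D

/-- `D` is standardizable. -/
def Standardizable {n : ℕ} (D : Set (Fin n → ℕ+)) : Prop :=
  ∀ a ∈ D, ∀ b ∈ D, a ≠ b → ∀ k : Fin n,
    (∀ i : Fin n, i < k → a i = b i) → a k < b k →
    (fun i => if i ≤ k then a i else max (a i) (b i)) ∈ D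

/-- degree of the variable `x_{i,j}` in the monomial `∏_ℓ x_{a ℓ}`. -/
def degOf {w n : ℕ} (a : Fin w → Fin n → ℕ+) (i : Fin n) (j : ℕ) : ℕ :=
  (Finset.univ.filter fun ℓ => ((a ℓ i : ℕ) = j)).card

/-
Identify `σ` with the lexicographic order on `ℤ₊ⁿ`, so `a ≥_σ b` means `toLex a ≤ toLex b`.
If some column `j` beyond the first difference `k` has `a j < b j`, swapping that column keeps
the tableau semi-standard (the rows still first differ at `k`), keeps the column supports, and
makes the first row lexicographically larger, so `[a; b]` is not minimal. Conversely, let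
`[c; d]` be semi-standard with the same columns and `c ≠ a`. At the first column `j` where
`c` and `a` differ, `c j = b j` and `d j = a j`, so `j ≥ k`. For `j = k` the rows `c, d` would
first differ at `k` with `c k > d k`, against `c ≥_σ d`; for `j > k` we get `c j = b j < a j`,
that is `c >_σ a`.
-/

open Function

theorem Multiset.pair_eq_pair_iff {α : Type*} {x y u v : α} :
    ({x, y} : Multiset α) = {u, v} ↔ x = u ∧ y = v ∨ x = v ∧ y = u := by
  refine ⟨fun h => ?_, ?_⟩
  · rcases Multiset.cons_eq_cons.1 h with ⟨rfl, hyv⟩ | ⟨-, cs, hy, hv⟩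
    · exact Or.inl ⟨rfl, Multiset.singleton_inj.1 hyv⟩
    · obtain ⟨rfl, rfl⟩ := (Multiset.singleton_eq_cons_iff _).1 hy
      exact Or.inr ⟨(Multiset.singleton_inj.1 hv).symm, rfl⟩
  · rintro (⟨rfl, rfl⟩ | ⟨rfl, rfl⟩)
    · rfl
    · exact Multiset.pair_comm _ _

section SigmaOrder

variable {n : ℕ} {a b : Fin n → ℕ+}

theorem sigmaGT_iff_toLex_lt : sigmaGT a b ↔ toLex a < toLex b := Iff.rfl

theorem sigmaGE_iff_toLex_le : sigmaGE a b ↔ toLex a ≤ toLex b := by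
  rw [le_iff_eq_or_lt, toLex_inj]
  rfl

theorem exists_first_ne_of_ne {α : Type*} [LinearOrder α] {f g : Fin n → α} (h : f ≠ g) :
    ∃ k, (∀ i < k, f i = g i) ∧ f k ≠ g k := by
  rcases lt_or_gt_of_ne (toLex_inj.not.2 h) with ⟨k, hk, hlt⟩ | ⟨k, hk, hlt⟩
  · exact ⟨k, hk, hlt.ne⟩
  · exact ⟨k, fun i hi => (hk i hi).symm, hlt.ne'⟩

theorem sigmaGT_update_update {k j : Fin n} (hk : ∀ i < k, a i = b i) (hlt : a k < b k)
    (hkj : k < j) (x y : ℕ+) : sigmaGT (update a j x) (update b j y) := by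
  refine ⟨k, fun i hi => ?_, ?_⟩
  · rw [update_of_ne (hi.trans hkj).ne, update_of_ne (hi.trans hkj).ne, hk i hi]
  · rwa [update_of_ne hkj.ne, update_of_ne hkj.ne]

end SigmaOrder

section TwoRowTableau

variable {n : ℕ} {a b c d : Fin n → ℕ+}

theorem semiStandard_pair_iff : SemiStandard ![a, b] ↔ sigmaGE a b := by
  refine ⟨fun h => h 0 1 (by decide), fun h i j hij => ?_⟩
  fin_cases i <;> fin_cases j
  · exact Or.inl rfl
  · exact h
  · exact absurd hij (by decide)
  · exact Or.inl rfl

theorem suppEq_pair_iff :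
    suppEq ![c, d] ![a, b] ↔ ∀ j, c j = a j ∧ d j = b j ∨ c j = b j ∧ d j = a j :=
  forall_congr' fun _ => Multiset.pair_eq_pair_iff

theorem tabGT_pair_iff : tabGT ![c, d] ![a, b] ↔ sigmaGT c a ∨ c = a ∧ sigmaGT d b := by
  simp [tabGT, Fin.exists_fin_two, Fin.forall_fin_two]

theorem not_isStandard_pair_of_lt_beyond_first_diff {k j : Fin n} (hk : ∀ i < k, a i = b i)
    (hlt : a k < b k) (hkj : k < j) (hj : a j < b j) : ¬ IsStandard ![a, b] := by
  rintro ⟨-, hmin⟩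
  have hsupp : suppEq ![update a j (b j), update b j (a j)] ![a, b] :=
    suppEq_pair_iff.2 fun i => by
      rcases eq_or_ne i j with rfl | hij
      · simp
      · simp [update_of_ne hij]
  have hne : ![update a j (b j), update b j (a j)] ≠ ![a, b] := fun h =>
    hj.ne' (by simpa using congrFun (congrFun h 0) j)
  have hgt := hmin _ (semiStandard_pair_iff.2 (Or.inr (sigmaGT_update_update hk hlt hkj _ _)))
    hsupp hne
  have hlex : toLex a < toLex (update a j (b j)) := Pi.lt_toLex_update_self_iff.2 hj
  rcases tabGT_pair_iff.1 hgt with hlt' | ⟨heq, -⟩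
  · exact (sigmaGT_iff_toLex_lt.1 hlt').asymm hlex
  · exact hlex.ne (congrArg toLex heq.symm)

theorem isStandard_pair_of_le_beyond_first_diff (hab : sigmaGE a b)
    (h : a = b ∨ ∃ k, (∀ i < k, a i = b i) ∧ a k < b k ∧ ∀ j, k < j → b j ≤ a j) :
    IsStandard ![a, b] := by
  refine ⟨semiStandard_pair_iff.2 hab, fun B hB hsupp hne => ?_⟩
  obtain ⟨c, d, rfl⟩ : ∃ c d, B = ![c, d] := ⟨B 0, B 1, by ext i; fin_cases i <;> rfl⟩
  rw [semiStandard_pair_iff, sigmaGE_iff_toLex_le] at hB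
  rw [suppEq_pair_iff] at hsupp
  refine tabGT_pair_iff.2 (Or.inl ?_)
  have hca : c ≠ a := by
    rintro rfl
    obtain rfl : d = b := funext fun j =>
      (hsupp j).elim And.right fun ⟨hcb, hdc⟩ => hdc.trans hcb
    exact hne rfl
  obtain ⟨j, hpre, hj⟩ := exists_first_ne_of_ne hca
  obtain ⟨hcj, hdj⟩ : c j = b j ∧ d j = a j := (hsupp j).resolve_left fun h => hj h.1
  rcases h with rfl | ⟨k, hk, hlt, hge⟩
  · exact absurd hcj hj
  have hkj : k ≤ j := not_lt.1 fun hjk => hj (hcj.trans (hk j hjk).symm)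
  rcases hkj.eq_or_lt with rfl | hkj
  · have hcd : ∀ i < k, c i = d i := fun i hi => by
      rcases hsupp i with ⟨-, hdi⟩ | ⟨-, hdi⟩
      · rw [hpre i hi, hk i hi, hdi]
      · rw [hpre i hi, hdi]
    have hle := Pi.apply_le_of_toLex hB hcd
    rw [hcj, hdj] at hle
    exact absurd hlt hle.not_gt
  · exact ⟨j, hpre, hcj ▸ (hge j hkj).lt_of_ne fun h => hj (hcj.trans h)⟩

end TwoRowTableau

theorem stmt2 {n : ℕ} (a b : Fin n → ℕ+) (h : sigmaGE a b) :
    IsStandard ![a, b] ↔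
      a = b ∨ ∃ k : Fin n, (∀ i : Fin n, i < k → a i = b i) ∧ a k < b k ∧
        ∀ j : Fin n, k < j → b j ≤ a j := by
  refine ⟨fun hstd => ?_, isStandard_pair_of_le_beyond_first_diff h⟩
  rcases h with hab | ⟨k, hk, hlt⟩
  · exact Or.inl hab
  exact Or.inr ⟨k, hk, hlt, fun j hkj =>
    not_lt.1 fun hj => not_isStandard_pair_of_lt_beyond_first_diff hk hlt hkj hj hstd⟩
end

section
/- A semi-standard p×n tableau A = [a¹,…,a^p] is standard if and only if the 2×n tableau [a^h; a^k] is standard for every 1 ≤ h < k ≤ p. -/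
open Finset

/-!
Write `≤` for the lexicographic order on rows, so that `a ≥_σ b` means `toLex a ≤ toLex b`, and
let `exceedSet a b` be the set of columns in which `b` exceeds `a`. For rows `a ≤ b`, the tableau
`[a; b]` is standard iff `b` exceeds `a` in at most one column, so the claim is that `A` is standard
iff every row exceeds each earlier row in at most one column.

If this holds and a semi-standard `B ≠ A` with the same columns were lexicographically larger,
first differing from `A` in row `r`, then every row of `B` from `r` on exceeds `A r` somewhere,
whereas the rows of `A` from `r` on exceed `A r` at most once each, and `A r` itself nowhere.
This contradicts the fact that, column by column, the number of entries exceeding `A r e` depends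
only on the column multiset.

Conversely, if rows `h < k` of a standard `A` violate the condition, with `k - h` minimal, then
`A k` exceeds `A h` at their first difference `c` and at some later column `c'`. Swapping the
tails of rows `h` and `k` from `c'` on gives a tableau with the same columns that is
lexicographically larger than `A`, and still semi-standard: minimality controls the rows between.
-/

section Lex

variable {ι α : Type*}

lemma toLex_lt_iff [LT ι] [LT α] {a b : ι → α} :
    toLex a < toLex b ↔ ∃ c, (∀ e < c, a e = b e) ∧ a c < b c := Iff.rfl

variable [LinearOrder ι] [LinearOrder α]

lemma toLex_lt_of_eq_before {a b a' b' : ι → α} {c : ι} (hab : toLex a < toLex b)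
    (hne : ¬ ∀ e < c, a e = b e) (ha : ∀ e < c, a' e = a e) (hb : ∀ e < c, b' e = b e) :
    toLex a' < toLex b' := by
  obtain ⟨m, hpre, hm⟩ := toLex_lt_iff.mp hab
  have hmc : m < c := by
    by_contra! hcm
    exact hne fun e he => hpre e (he.trans_le hcm)
  exact toLex_lt_iff.mpr ⟨m, fun e he => by rw [ha e (he.trans hmc), hb e (he.trans hmc),
    hpre e he], by rwa [ha m hmc, hb m hmc]⟩

end Lex

section ExceedSet

variable {ι α : Type*} [Fintype ι] [LinearOrder α]

def exceedSet (a b : ι → α) : Finset ι := univ.filter fun e => a e < b e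

lemma mem_exceedSet {a b : ι → α} {e : ι} : e ∈ exceedSet a b ↔ a e < b e := by
  simp [exceedSet]

@[simp]
lemma exceedSet_self (a : ι → α) : exceedSet a a = ∅ := by
  ext; simp [mem_exceedSet]

lemma exceedSet_nonempty [LinearOrder ι] {a b : ι → α} (h : toLex a < toLex b) :
    (exceedSet a b).Nonempty :=
  let ⟨c, _, hc⟩ := toLex_lt_iff.mp h
  ⟨c, mem_exceedSet.mpr hc⟩

end ExceedSet

section Splice

variable {ι α : Type*} [LinearOrder ι]

def splice (a b : ι → α) (c : ι) : ι → α := fun e => if e < c then a e else b e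

lemma splice_of_lt {a b : ι → α} {c e : ι} (he : e < c) : splice a b c e = a e := if_pos he

lemma splice_of_le {a b : ι → α} {c e : ι} (he : c ≤ e) : splice a b c e = b e :=
  if_neg (not_lt.mpr he)

@[simp]
lemma splice_self (a : ι → α) (c : ι) : splice a a c = a := funext fun _ => ite_self _

def swapTails {κ : Type*} [DecidableEq κ] (A : κ → ι → α) (h k : κ) (c : ι) : κ → ι → α :=
  fun i => splice (A i) (A (Equiv.swap h k i)) c

section SwapTails

variable {κ : Type*} [DecidableEq κ] {A : κ → ι → α} {h k i : κ} {c : ι}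

lemma swapTails_left : swapTails A h k c h = splice (A h) (A k) c := by
  simp [swapTails]

lemma swapTails_right : swapTails A h k c k = splice (A k) (A h) c := by
  simp [swapTails]

lemma swapTails_of_ne (hih : i ≠ h) (hik : i ≠ k) : swapTails A h k c i = A i := by
  simp [swapTails, Equiv.swap_apply_of_ne_of_ne hih hik]

end SwapTails

variable [LinearOrder α]

lemma toLex_lt_splice {a b : ι → α} {c : ι} (h : a c < b c) : toLex a < toLex (splice a b c) :=
  toLex_lt_iff.mpr ⟨c, fun _ he => (splice_of_lt he).symm, by rwa [splice_of_le le_rfl]⟩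

lemma toLex_splice_lt {a b : ι → α} {c : ι} (h : b c < a c) : toLex (splice a b c) < toLex a :=
  toLex_lt_iff.mpr ⟨c, fun _ he => splice_of_lt he, by rwa [splice_of_le le_rfl]⟩

lemma toLex_splice_lt_splice {a b : ι → α} {c c' : ι} (hcc' : c < c')
    (hpre : ∀ e < c, a e = b e) (hc : a c < b c) : toLex (splice a b c') < toLex (splice b a c') :=
  toLex_lt_of_eq_before (toLex_lt_iff.mpr ⟨c, hpre, hc⟩) (fun h => hc.ne (h c hcc'))
    (fun _ he => splice_of_lt he) (fun _ he => splice_of_lt he)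

variable [Fintype ι]

lemma toLex_splice_le {x y w : ι → α} {c c' : ι} (hcc' : c < c') (hc : x c < y c)
    (hxw : toLex x ≤ toLex w) (hwy : #(exceedSet w y) ≤ 1) :
    toLex (splice x y c') ≤ toLex w := by
  by_cases hxw' : ∀ e < c', x e = w e
  · refine Pi.toLex_monotone fun e => ?_
    rcases lt_or_ge e c' with he | he
    · rw [splice_of_lt he, hxw' e he]
    · rw [splice_of_le he]
      have hcw : c ∈ exceedSet w y := by
        rw [mem_exceedSet, ← hxw' c hcc']
        exact hc
      refine not_lt.mp fun hlt => (hcc'.trans_le he).ne ?_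
      exact card_le_one.mp hwy c hcw e (mem_exceedSet.mpr hlt)
  · have hlt : toLex x < toLex w := hxw.lt_of_ne fun h => hxw' fun e _ => congrFun h e
    exact (toLex_lt_of_eq_before hlt hxw' (fun _ he => splice_of_lt he) fun _ _ => rfl).le

lemma toLex_le_splice {x y w : ι → α} {c c' : ι} (hcc' : c < c') (hc : x c < y c)
    (hwy : toLex w ≤ toLex y) (hxw : #(exceedSet x w) ≤ 1) :
    toLex w ≤ toLex (splice y x c') := by
  by_cases hwy' : ∀ e < c', w e = y e
  · refine Pi.toLex_monotone fun e => ?_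
    rcases lt_or_ge e c' with he | he
    · rw [splice_of_lt he, hwy' e he]
    · rw [splice_of_le he]
      have hcw : c ∈ exceedSet x w := by
        rw [mem_exceedSet, hwy' c hcc']
        exact hc
      refine not_lt.mp fun hlt => (hcc'.trans_le he).ne ?_
      exact card_le_one.mp hxw c hcw e (mem_exceedSet.mpr hlt)
  · have hlt : toLex w < toLex y := hwy.lt_of_ne fun h => hwy' fun e _ => congrFun h e
    exact (toLex_lt_of_eq_before hlt hwy' (fun _ _ => rfl) fun _ he => splice_of_lt he).le

end Splice

theorem Monotone.of_eq_off_pair {ι β : Type*} [LinearOrder ι] [Preorder β] {f g : ι → β}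
    {h k : ι} (hf : Monotone f) (hhk : h < k) (hg : ∀ i, i ≠ h → i ≠ k → g i = f i)
    (hh : f h ≤ g h) (hgg : g h ≤ g k) (hk : g k ≤ f k)
    (hmid : ∀ j, h < j → j < k → g h ≤ f j ∧ f j ≤ g k) : Monotone g := by
  have above_h : ∀ j, h < j → g h ≤ g j := by
    intro j hj
    rcases lt_trichotomy j k with hjk | rfl | hkj
    · exact (hmid j hj hjk).1.trans_eq (hg j hj.ne' hjk.ne).symm
    · exact hgg
    · exact hgg.trans (hk.trans ((hf hkj.le).trans_eq (hg j hj.ne' hkj.ne').symm))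
  have below_k : ∀ i, i < k → g i ≤ g k := by
    intro i hi
    rcases lt_trichotomy i h with hih | rfl | hhi
    · exact ((hg i hih.ne hi.ne).trans_le ((hf hih.le).trans hh)).trans hgg
    · exact hgg
    · exact (hg i hhi.ne' hi.ne).trans_le (hmid i hhi hi).2
  refine monotone_iff_forall_lt.mpr fun i j hij => ?_
  rcases eq_or_ne i h with rfl | hih
  · exact above_h j hij
  rcases eq_or_ne j k with rfl | hjk
  · exact below_k i hij
  rcases eq_or_ne i k with rfl | hik
  · exact hk.trans ((hf hij.le).trans_eq (hg j (hhk.trans hij).ne' hjk).symm)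
  rcases eq_or_ne j h with rfl | hjh
  · exact (hg i hih hik).trans_le ((hf hij.le).trans hh)
  · rw [hg i hih hik, hg j hjh hjk]
    exact hf hij.le

section Tableau

variable {p n : ℕ} {A B : Fin p → Fin n → ℕ+}

lemma sigmaGT_iff {a b : Fin n → ℕ+} : sigmaGT a b ↔ toLex a < toLex b := Iff.rfl

lemma sigmaGE_iff {a b : Fin n → ℕ+} : sigmaGE a b ↔ toLex a ≤ toLex b := by
  rw [sigmaGE, sigmaGT_iff, le_iff_eq_or_lt, toLex_inj]
  rfl

lemma semiStandard_iff_monotone : SemiStandard A ↔ Monotone fun i => toLex (A i) := by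
  simp only [SemiStandard, sigmaGE_iff, Monotone]

lemma tabGT_iff : tabGT B A ↔ toLex (fun i => toLex (B i)) < toLex (fun i => toLex (A i)) :=
  Iff.rfl

lemma not_tabGT_of_toLex_lt {h : Fin p} (hpre : ∀ i < h, A i = B i)
    (hlt : toLex (A h) < toLex (B h)) : ¬ tabGT B A := by
  rw [tabGT_iff]
  exact lt_asymm (toLex_lt_iff.mpr ⟨h, fun i hi => congrArg toLex (hpre i hi), hlt⟩)

lemma suppEq.sum_comp_eq {M : Type*} [AddCommMonoid M] (hsupp : suppEq B A) (e : Fin n)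
    (φ : ℕ+ → M) : ∑ i, φ (B i e) = ∑ i, φ (A i e) := by
  have := congrArg (fun s => (s.map φ).sum) (hsupp e)
  simp only [Multiset.map_map] at this
  exact this

lemma suppEq.sum_card_exceedSet (hsupp : suppEq B A) (a : Fin n → ℕ+) :
    ∑ i, #(exceedSet a (B i)) = ∑ i, #(exceedSet a (A i)) := by
  simp only [exceedSet, card_filter]
  rw [sum_comm, sum_comm (f := fun i e => if a e < A i e then 1 else 0)]
  exact sum_congr rfl fun e _ => hsupp.sum_comp_eq e fun v => if a e < v then 1 else 0

theorem isStandard_of_card_exceedSet_le_one (hA : SemiStandard A)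
    (hpair : ∀ h k, h < k → #(exceedSet (A h) (A k)) ≤ 1) : IsStandard A := by
  refine ⟨hA, fun B hB hsupp hne => ?_⟩
  rw [tabGT_iff]
  have hne' : (toLex fun i => toLex (B i)) ≠ toLex fun i => toLex (A i) := hne
  refine (lt_or_gt_of_ne hne').resolve_right fun hAB => ?_
  obtain ⟨r, hpre, hr⟩ := toLex_lt_iff.mp hAB
  have hB_exceeds : ∀ i, r ≤ i → 1 ≤ #(exceedSet (A r) (B i)) := fun i hi =>
    card_pos.mpr (exceedSet_nonempty (hr.trans_le (semiStandard_iff_monotone.mp hB hi)))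
  have hA_le : ∀ i, #(exceedSet (A r) (A i)) ≤ #(exceedSet (A r) (B i)) := by
    intro i
    rcases lt_or_ge i r with hi | hi
    · rw [toLex_inj.mp (hpre i hi)]
    rcases hi.eq_or_lt with rfl | hi
    · simp
    · exact (hpair r i hi).trans (hB_exceeds i hi.le)
  have hA_lt : #(exceedSet (A r) (A r)) < #(exceedSet (A r) (B r)) := by
    simpa using hB_exceeds r le_rfl
  exact (sum_lt_sum (fun i _ => hA_le i) ⟨r, mem_univ r, hA_lt⟩).ne
    (hsupp.sum_card_exceedSet (A r)).symm

lemma suppEq_swapTails (A : Fin p → Fin n → ℕ+) (h k : Fin p) (c : Fin n) :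
    suppEq (swapTails A h k c) A := by
  intro e
  rcases lt_or_ge e c with he | he
  · simp only [swapTails, splice_of_lt he]
  · have hcol : (fun i => swapTails A h k c i e) = (fun i => A i e) ∘ Equiv.swap h k :=
      funext fun i => splice_of_le he
    rw [hcol, ← Multiset.map_map, Multiset.map_univ_val_equiv]

lemma semiStandard_swapTails {h k : Fin p} {c c' : Fin n} (hA : SemiStandard A) (hhk : h < k)
    (hcc' : c < c') (hpre : ∀ e < c, A h e = A k e) (hc : A h c < A k c) (hc' : A h c' < A k c')
    (hmid : ∀ j, h < j → j < k → #(exceedSet (A h) (A j)) ≤ 1 ∧ #(exceedSet (A j) (A k)) ≤ 1) :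
    SemiStandard (swapTails A h k c') := by
  rw [semiStandard_iff_monotone] at hA ⊢
  refine hA.of_eq_off_pair hhk (fun i hih hik => by rw [swapTails_of_ne hih hik]) ?_ ?_ ?_ ?_ <;>
    simp only [swapTails_left, swapTails_right]
  · exact (toLex_lt_splice hc').le
  · exact (toLex_splice_lt_splice hcc' hpre hc).le
  · exact (toLex_splice_lt hc').le
  · intro j hhj hjk
    exact ⟨toLex_splice_le hcc' hc (hA hhj.le) (hmid j hhj hjk).2,
      toLex_le_splice hcc' hc (hA hjk.le) (hmid j hhj hjk).1⟩

theorem IsStandard.card_exceedSet_le_one_of_between (hA : IsStandard A) {h k : Fin p}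
    (hhk : h < k)
    (hmid : ∀ j, h < j → j < k → #(exceedSet (A h) (A j)) ≤ 1 ∧ #(exceedSet (A j) (A k)) ≤ 1) :
    #(exceedSet (A h) (A k)) ≤ 1 := by
  by_contra! hcard
  have hne : A h ≠ A k := fun heq => by simp [heq] at hcard
  obtain ⟨c, hpre, hc⟩ := toLex_lt_iff.mp <|
    (semiStandard_iff_monotone.mp hA.1 hhk.le).lt_of_ne (toLex_inj.not.mpr hne)
  obtain ⟨c', hc'mem, hc'c⟩ := exists_mem_ne hcard c
  have hc' : A h c' < A k c' := mem_exceedSet.mp hc'mem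
  have hcc' : c < c' := hc'c.symm.lt_of_le <| not_lt.mp fun h => hc'.ne (hpre c' h)
  refine not_tabGT_of_toLex_lt (h := h) (fun i hi => ?_) ?_ <| hA.2 _
    (semiStandard_swapTails hA.1 hhk hcc' hpre hc hc' hmid) (suppEq_swapTails A h k c') ?_
  · exact (swapTails_of_ne hi.ne (hi.trans hhk).ne).symm
  · rw [swapTails_left]
    exact toLex_lt_splice hc'
  · intro heq
    have := congrFun (congrFun heq h) c'
    rw [swapTails_left, splice_of_le le_rfl] at this
    exact hc'.ne' this

theorem IsStandard.card_exceedSet_le_one (hA : IsStandard A) {h k : Fin p} (hhk : h < k) :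
    #(exceedSet (A h) (A k)) ≤ 1 := by
  induction hd : (k : ℕ) - h using Nat.strong_induction_on generalizing h k with
  | _ d ih =>
    refine hA.card_exceedSet_le_one_of_between hhk fun j hhj hjk =>
      ⟨ih _ ?_ hhj rfl, ih _ ?_ hjk rfl⟩ <;> omega

lemma isStandard_pair_iff {a b : Fin n → ℕ+} (hab : toLex a ≤ toLex b) :
    IsStandard ![a, b] ↔ #(exceedSet a b) ≤ 1 := by
  refine ⟨fun hS => by simpa using hS.card_exceedSet_le_one Fin.zero_lt_one, fun h => ?_⟩
  refine isStandard_of_card_exceedSet_le_one ?_ fun i j hij => ?_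
  · rw [semiStandard_iff_monotone, Fin.monotone_iff_le_succ]
    simpa using hab
  · fin_cases i <;> fin_cases j <;> simp_all

end Tableau

theorem stmt5 {p n : ℕ} (A : Fin p → Fin n → ℕ+) (hA : SemiStandard A) :
    IsStandard A ↔ ∀ h k : Fin p, h < k → IsStandard ![A h, A k] := by
  have hpair : ∀ h k : Fin p, h < k → (IsStandard ![A h, A k] ↔ #(exceedSet (A h) (A k)) ≤ 1) :=
    fun h k hhk => isStandard_pair_iff (semiStandard_iff_monotone.mp hA hhk.le)
  exact ⟨fun hS h k hhk => (hpair h k hhk).mpr (hS.card_exceedSet_le_one hhk),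
    fun hP => isStandard_of_card_exceedSet_le_one hA fun h k hhk => (hpair h k hhk).mp (hP h k hhk)⟩
end

section
/- If D ⊆ ℤ₊ⁿ is a standardizable Ferrers diagram and r ≥ 1, then the Cartesian product D × [r] ⊆ ℤ₊^{n+1} is a standardizable (n+1)-dimensional Ferrers diagram. -/
open Finset

/-- `D × S ⊆ ℤ₊ⁿ⁺¹`; the paper's `D × [r]` is `snocProd D (Set.Iic r)`. -/
def snocProd {n : ℕ} (D : Set (Fin n → ℕ+)) (S : Set ℕ+) : Set (Fin (n + 1) → ℕ+) :=
  {x | Fin.init x ∈ D ∧ x (Fin.last n) ∈ S}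

section snocProd

variable {n : ℕ} {D : Set (Fin n → ℕ+)} {S : Set ℕ+}

theorem snocProd_eq_preimage (D : Set (Fin n → ℕ+)) (S : Set ℕ+) :
    snocProd D S = (Fin.snocEquiv fun _ => ℕ+).symm ⁻¹' (S ×ˢ D) := by
  ext x
  simp [snocProd, Fin.snocEquiv, and_comm]

theorem IsFerrers.snocProd (hD : IsFerrers D) (hS : S.Nonempty) (hSfin : S.Finite)
    (hSlow : IsLowerSet S) : IsFerrers (snocProd D S) := by
  obtain ⟨d, hd⟩ := hD.1
  obtain ⟨s, hs⟩ := hS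
  refine ⟨⟨Fin.snoc d s, by simpa [_root_.snocProd] using ⟨hd, hs⟩⟩, ?_, ?_⟩
  · rw [snocProd_eq_preimage]
    exact (hSfin.prod hD.2.1).preimage (Equiv.injective _).injOn
  · rintro b ⟨hbD, hbS⟩ a hab
    exact ⟨hD.2.2 _ hbD _ fun i => hab i.castSucc, hSlow (hab (Fin.last n)) hbS⟩

theorem Standardizable.snocProd (hD : Standardizable D) (hS : SupClosed S) :
    Standardizable (snocProd D S) := by
  rintro a ⟨haD, haS⟩ b ⟨hbD, hbS⟩ - k hpre hk
  induction k using Fin.lastCases with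
  | last =>
    have h_eq : (fun i => if i ≤ Fin.last n then a i else max (a i) (b i)) = a :=
      funext fun i => if_pos (Fin.le_last i)
    rw [h_eq]
    exact ⟨haD, haS⟩
  | cast k =>
    have hinit : Fin.init a ≠ Fin.init b := fun h => hk.ne (congrFun h k)
    have hmem := hD _ haD _ hbD hinit k (fun i hi => hpre i.castSucc (by simpa using hi)) hk
    refine ⟨by simpa only [Fin.init_def, Fin.castSucc_le_castSucc_iff] using hmem, ?_⟩
    simpa [(Fin.castSucc_lt_last k).not_ge] using hS haS hbS

end snocProd

theorem stmt10 {n : ℕ} (D : Set (Fin n → ℕ+)) (hD : IsFerrers D)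
    (hS : Standardizable D) (r : ℕ+) :
    IsFerrers {x : Fin (n + 1) → ℕ+ |
        (fun i : Fin n => x i.castSucc) ∈ D ∧ x (Fin.last n) ≤ r} ∧
    Standardizable {x : Fin (n + 1) → ℕ+ |
        (fun i : Fin n => x i.castSucc) ∈ D ∧ x (Fin.last n) ≤ r} :=
  ⟨hD.snocProd (S := Set.Iic r) Set.nonempty_Iic (Set.finite_Iic r) (isLowerSet_Iic r),
    hS.snocProd (S := Set.Iic r) fun _ ha _ hb => Set.mem_Iic.2 (max_le ha hb)⟩
end

section
/- Let D be an n-dimensional Ferrers diagram with associated squarefree monomial x_a = ∏_{i=1}^n x_{i,a_i} in the polynomial ring K[x_{i,j} : i ∈ [n], j ∈ [m]]. Suppose u = ∏_{ℓ=1}^w x_{a^ℓ} and v = ∏_{ℓ=1}^w x_{b^ℓ} are products of w generators of the Ferrers ideal (a^ℓ, b^ℓ ∈ D), and suppose for some variable x_{i₀,j₀}: deg_z(u) = deg_z(v) for all variables z preceding x_{i₀,j₀} in the order x_{1,1},…,x_{1,m},x_{2,1},…,x_{n,m}, while deg_{x_{i₀,j₀}}(u) < deg_{x_{i₀,j₀}}(v).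 Then there exist ℓ ∈ [w] and j₁ with j₀ < j₁ ≤ m such that a^ℓ_{i₀} = j₁ and the tuple obtained from a^ℓ by replacing its i₀-th coordinate with j₀ lies in D. -/
open Finset

/-!
If some generator `a ℓ` of `u` has `i₀`-th coordinate `j₁ > j₀`, lowering that coordinate to `j₀`
stays inside the down-closed set `D`. Otherwise every `a ℓ` has `i₀`-th coordinate at most `j₀`,
so the degrees of `u` in `x_{i₀,1}, …, x_{i₀,j₀}` add up to `w`; the degrees of `v` in the same
variables add up to at most `w`, yet they dominate those of `u`, strictly at `x_{i₀,j₀}`.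
-/

theorem sum_degOf_eq_card_filter {w n : ℕ} (c : Fin w → Fin n → ℕ+) (i : Fin n)
    (t : Finset ℕ) :
    ∑ j ∈ t, degOf c i j = #{ℓ | (c ℓ i : ℕ) ∈ t} :=
  sum_card_fiberwise_eq_card_filter _ _ _

theorem sum_degOf_le {w n : ℕ} (c : Fin w → Fin n → ℕ+) (i : Fin n) (t : Finset ℕ) :
    ∑ j ∈ t, degOf c i j ≤ w := by
  rw [sum_degOf_eq_card_filter]
  exact (card_filter_le _ _).trans_eq (card_fin w)

theorem sum_degOf_range_eq_of_forall_le {w n : ℕ} (c : Fin w → Fin n → ℕ+) (i : Fin n)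
    {k : ℕ} (hc : ∀ ℓ, (c ℓ i : ℕ) ≤ k) :
    ∑ j ∈ range (k + 1), degOf c i j = w := by
  rw [sum_degOf_eq_card_filter, filter_true_of_mem fun ℓ _ => mem_range_succ_iff.2 (hc ℓ),
    card_univ, Fintype.card_fin]

theorem exists_lt_apply_of_degOf_lt {w n : ℕ} (a b : Fin w → Fin n → ℕ+) (i : Fin n) {k : ℕ}
    (hpre : ∀ j < k, degOf a i j = degOf b i j) (hlt : degOf a i k < degOf b i k) :
    ∃ ℓ, k < (a ℓ i : ℕ) := by
  by_contra! hle
  have hsum : ∑ j ∈ range (k + 1), degOf a i j < ∑ j ∈ range (k + 1), degOf b i j := by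
    refine sum_lt_sum (fun j hj => ?_) ⟨k, self_mem_range_succ k, hlt⟩
    rcases (mem_range_succ_iff.1 hj).lt_or_eq with hjk | rfl
    · exact (hpre j hjk).le
    · exact hlt.le
  rw [sum_degOf_range_eq_of_forall_le a i hle] at hsum
  exact hsum.not_ge (sum_degOf_le b i _)

theorem IsFerrers.update_mem {n : ℕ} {D : Set (Fin n → ℕ+)} (hD : IsFerrers D)
    {x : Fin n → ℕ+} (hx : x ∈ D) {i : Fin n} {y : ℕ+} (hy : y ≤ x i) :
    Function.update x i y ∈ D :=
  hD.2.2 x hx _ fun k => by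
    rcases eq_or_ne k i with rfl | hk
    · simpa using hy
    · simp [hk]

theorem stmt13_general {n w : ℕ} (D : Set (Fin n → ℕ+)) (hD : IsFerrers D)
    (m : ℕ) (hm : ∀ x ∈ D, ∀ i, (x i : ℕ) ≤ m)
    (a b : Fin w → Fin n → ℕ+)
    (ha : ∀ ℓ, a ℓ ∈ D)
    (i₀ : Fin n) (j₀ : ℕ) (hj₀ : 0 < j₀)
    (hpre : ∀ (i : Fin n) (j : ℕ), (i < i₀ ∨ (i = i₀ ∧ j < j₀)) →
      degOf a i j = degOf b i j)
    (hlt : degOf a i₀ j₀ < degOf b i₀ j₀) :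
    ∃ (ℓ : Fin w) (j₁ : ℕ+), j₀ < (j₁ : ℕ) ∧ (j₁ : ℕ) ≤ m ∧ a ℓ i₀ = j₁ ∧
      Function.update (a ℓ) i₀ ⟨j₀, hj₀⟩ ∈ D := by
  obtain ⟨ℓ, hℓ⟩ := exists_lt_apply_of_degOf_lt a b i₀
    (fun j hj => hpre i₀ j (Or.inr ⟨rfl, hj⟩)) hlt
  exact ⟨ℓ, a ℓ i₀, hℓ, hm _ (ha ℓ) i₀, rfl,
    hD.update_mem (ha ℓ) (show j₀ ≤ (a ℓ i₀ : ℕ) from hℓ.le)⟩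

theorem stmt13 {n w : ℕ} (D : Set (Fin n → ℕ+)) (hD : IsFerrers D)
    (m : ℕ) (hm : ∀ x ∈ D, ∀ i, (x i : ℕ) ≤ m)
    (a b : Fin w → Fin n → ℕ+)
    (ha : ∀ ℓ, a ℓ ∈ D) (hb : ∀ ℓ, b ℓ ∈ D)
    (i₀ : Fin n) (j₀ : ℕ) (hj₀ : 0 < j₀) (hj₀m : j₀ ≤ m)
    (hpre : ∀ (i : Fin n) (j : ℕ), (i < i₀ ∨ (i = i₀ ∧ j < j₀)) →
      degOf a i j = degOf b i j)
    (hlt : degOf a i₀ j₀ < degOf b i₀ j₀) :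
    ∃ (ℓ : Fin w) (j₁ : ℕ+), j₀ < (j₁ : ℕ) ∧ (j₁ : ℕ) ≤ m ∧ a ℓ i₀ = j₁ ∧
      Function.update (a ℓ) i₀ ⟨j₀, hj₀⟩ ∈ D :=
  stmt13_general D hD m hm a b ha i₀ j₀ hj₀ hpre hlt
end

section
/- Let B = [b_{i,j}] be the p×n tableau produced by the standardization algorithm from a semi-standard tableau A: column 1 of B equals column 1 of A, and for each j the (j+1)-th column is the unique rearrangement of the multiset supp_{j+1}(A) satisfying (Cond-2) if b^i_j >_σ b^{i'}_j then b_{i,j+1} ≥ b_{i',j+1}, and (Cond-3) if b^i_j = b^{i'}_j with i < i' then b_{i,j+1} ≤ b_{i',j+1} (where b^i_j = (b_{i,1},…,b_{i,j})). Then B is a standard tableau with supp(B) = supp(A). -/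
/-!
Semi-standardness of `B` is read off column by column: its first column is that of `A`, and
(Cond-3) orders the next entry of rows with equal prefixes.

For minimality, suppose a semi-standard `C` with the same column supports were σ-smaller than `B`:
the rows agree above `k`, rows `k` agree before column `m`, and `B k m < C k m`. Count the rows
`i ≥ k` sharing the first `l` entries of row `k`. By (Cond-2), every row `i ≥ k` of `B` whose
entry in column `l` exceeds `B k l` still shares that prefix, so `B`'s class loses as many rows
as the column supports allow; by induction `B`'s class is at most `C`'s up to column `m`. At
column `m` the same count, together with `B k m < C k m`, makes `C`'s class strictly smaller
than `B`'s, a contradiction.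
-/

open Finset

section Tableau

variable {p n : ℕ}

-- `sigmaGT` is `Pi.Lex (· < ·) (· < ·)`, the strict order of `Lex (Fin n → ℕ+)`.
theorem sigmaGT_trichotomous : Std.Trichotomous (sigmaGT (n := n)) :=
  Pi.trichotomous_lex (· < ·) (· < ·) wellFounded_lt

theorem tabGT_trichotomy (A B : Fin p → Fin n → ℕ+) : tabGT A B ∨ A = B ∨ tabGT B A := by
  have := sigmaGT_trichotomous (n := n)
  have hlex := Pi.trichotomous_lex (β := fun _ : Fin p => Fin n → ℕ+) (· < ·)
    (fun {_} => sigmaGT) wellFounded_lt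
  by_contra! h
  exact h.2.1 (hlex.trichotomous A B h.1 h.2.2)

theorem semiStandard_iff_forall_apply_le {D : Fin p → Fin n → ℕ+} :
    SemiStandard D ↔ ∀ (i i' : Fin p) (c : Fin n), i ≤ i' →
      (∀ t < c, D i t = D i' t) → D i c ≤ D i' c := by
  constructor
  · rintro hD i i' c hii hpre
    rcases hD i i' hii with heq | ⟨t, hbef, hlt⟩
    · exact (congrFun heq c).le
    · rcases lt_trichotomy t c with htc | rfl | hct
      · exact absurd (hpre t htc) hlt.ne
      · exact hlt.le
      · exact (hbef c hct).le
  · intro hD i i' hii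
    by_contra hge
    obtain ⟨hne, hngt⟩ := not_or.mp hge
    obtain ⟨t, hbef, hlt⟩ : sigmaGT (D i') (D i) :=
      by_contra fun hlt => hne (sigmaGT_trichotomous.trichotomous _ _ hngt hlt)
    exact (hD i i' t hii fun u hu => (hbef u hu).symm).not_gt hlt

def prefixClass (D : Fin p → Fin n → ℕ+) (k : Fin p) (l : ℕ) : Finset (Fin p) :=
  {i | k ≤ i ∧ ∀ t : Fin n, (t : ℕ) < l → D i t = D k t}

theorem mem_prefixClass {D : Fin p → Fin n → ℕ+} {k i : Fin p} {l : ℕ} :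
    i ∈ prefixClass D k l ↔ k ≤ i ∧ ∀ t : Fin n, (t : ℕ) < l → D i t = D k t := by
  simp [prefixClass]

theorem prefixClass_zero (D : Fin p → Fin n → ℕ+) (k : Fin p) :
    prefixClass D k 0 = ({i | k ≤ i} : Finset (Fin p)) := by
  ext i; simp [mem_prefixClass]

theorem prefixClass_succ (D : Fin p → Fin n → ℕ+) (k : Fin p) {l : ℕ} (hl : l < n) :
    prefixClass D k (l + 1) = (prefixClass D k l).filter (D · ⟨l, hl⟩ = D k ⟨l, hl⟩) := by
  ext i
  simp only [mem_prefixClass, Finset.mem_filter, Nat.lt_succ_iff_lt_or_eq, or_imp,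
    forall_and, and_assoc]
  refine and_congr_right fun _ => and_congr_right fun _ => ⟨fun h => h _ rfl, ?_⟩
  rintro h t rfl
  exact h

theorem card_prefixClass_succ {D : Fin p → Fin n → ℕ+} (hD : SemiStandard D) (k : Fin p)
    {l : ℕ} (hl : l < n) :
    #(prefixClass D k l) = #(prefixClass D k (l + 1))
      + #((prefixClass D k l).filter (D k ⟨l, hl⟩ < D · ⟨l, hl⟩)) := by
  rw [prefixClass_succ D k hl, ← Finset.card_filter_add_card_filter_not (s := prefixClass D k l)
    (p := (D · ⟨l, hl⟩ = D k ⟨l, hl⟩))]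
  congr 2
  refine Finset.filter_congr fun i hi => ?_
  obtain ⟨hki, hpre⟩ := mem_prefixClass.mp hi
  have hle := semiStandard_iff_forall_apply_le.mp hD k i ⟨l, hl⟩ hki
    fun t ht => (hpre t ht).symm
  exact ⟨fun hne => hle.lt_of_ne' hne, fun hlt => hlt.ne'⟩

theorem suppEq.card_filter_from_eq {C B : Fin p → Fin n → ℕ+} (hs : suppEq C B) {k : Fin p}
    (hrows : ∀ i < k, B i = C i) (c : Fin n) (q : ℕ+ → Prop) [DecidablePred q] :
    #{i | k ≤ i ∧ q (C i c)} = #{i | k ≤ i ∧ q (B i c)} := by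
  have hsplit (f : Fin p → ℕ+) :
      #{i | q (f i)} = #{i | k ≤ i ∧ q (f i)} + #{i | i < k ∧ q (f i)} := by
    rw [← Finset.card_filter_add_card_filter_not (p := (k ≤ ·)), Finset.filter_filter,
      Finset.filter_filter]
    congr 2 <;> ext <;> simp [and_comm]
  have hcount (f : Fin p → ℕ+) :
      #{i | q (f i)} = Multiset.countP q (Multiset.map f Finset.univ.val) := by
    rw [Multiset.countP_map]; rfl
  have hfull : #{i | q (C i c)} = #{i | q (B i c)} := by
    rw [hcount, hcount, hs c]
  have hlow : #{i | i < k ∧ q (C i c)} = #{i | i < k ∧ q (B i c)} := by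
    congr 1
    refine Finset.filter_congr fun i _ => and_congr_right fun hi => ?_
    rw [hrows i hi]
  have := hsplit (C · c)
  have := hsplit (B · c)
  omega

/-- Condition (Cond-2) of the standardization algorithm. -/
def LexPrefixAntitone (B : Fin p → Fin n → ℕ+) : Prop :=
  ∀ (i i' : Fin p) (j : ℕ) (hj : j + 1 < n),
    (∃ k : Fin n, (k : ℕ) ≤ j ∧ (∀ l : Fin n, l < k → B i l = B i' l) ∧
      B i k < B i' k) →
    B i' ⟨j + 1, hj⟩ ≤ B i ⟨j + 1, hj⟩

section LexPrefixAntitone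

variable {B : Fin p → Fin n → ℕ+}

theorem apply_le_of_notMem_prefixClass (hB : SemiStandard B) (h2 : LexPrefixAntitone B)
    {k i : Fin p} (hki : k ≤ i) {l : ℕ} (hl : l < n) (hi : i ∉ prefixClass B k l) :
    B i ⟨l, hl⟩ ≤ B k ⟨l, hl⟩ := by
  have hagree (u : Fin n) (hu : l ≤ u) (hbef : ∀ t < u, B k t = B i t) :
      i ∈ prefixClass B k l :=
    mem_prefixClass.mpr ⟨hki, fun t ht => (hbef t (by omega)).symm⟩
  rcases hB k i hki with heq | ⟨u, hbef, hlt⟩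
  · exact absurd (hagree ⟨l, hl⟩ le_rfl fun t _ => congrFun heq t) hi
  · have hul : (u : ℕ) < l := by
      by_contra! hlu
      exact hi (hagree u hlu hbef)
    obtain ⟨j, rfl⟩ : ∃ j, l = j + 1 := ⟨l - 1, by omega⟩
    exact h2 k i j hl ⟨u, by omega, hbef, hlt⟩

theorem filter_prefixClass_lt_eq (hB : SemiStandard B) (h2 : LexPrefixAntitone B) (k : Fin p)
    {l : ℕ} (hl : l < n) :
    (prefixClass B k l).filter (B k ⟨l, hl⟩ < B · ⟨l, hl⟩)
      = ({i | k ≤ i ∧ B k ⟨l, hl⟩ < B i ⟨l, hl⟩} : Finset (Fin p)) := by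
  ext i
  simp only [Finset.mem_filter, Finset.mem_univ, true_and]
  refine ⟨fun ⟨hi, hlt⟩ => ⟨(mem_prefixClass.mp hi).1, hlt⟩,
    fun ⟨hki, hlt⟩ => ⟨?_, hlt⟩⟩
  by_contra hi
  exact (apply_le_of_notMem_prefixClass hB h2 hki hl hi).not_gt hlt

theorem card_prefixClass_le (hB : SemiStandard B) (h2 : LexPrefixAntitone B)
    {C : Fin p → Fin n → ℕ+} (hC : SemiStandard C) (hs : suppEq C B) {k : Fin p}
    (hrows : ∀ i < k, B i = C i) {m : ℕ} (hm : m ≤ n)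
    (hcols : ∀ l : Fin n, (l : ℕ) < m → B k l = C k l) :
    #(prefixClass B k m) ≤ #(prefixClass C k m) := by
  induction m with
  | zero => rw [prefixClass_zero, prefixClass_zero]
  | succ m ih =>
    have hm : m < n := by omega
    have ih := ih hm.le fun l hl => hcols l (by omega)
    have hBsucc := card_prefixClass_succ hB k hm
    have hCsucc := card_prefixClass_succ hC k hm
    have hcol : B k ⟨m, hm⟩ = C k ⟨m, hm⟩ := hcols _ (Nat.lt_succ_self m)
    have hsplitB := filter_prefixClass_lt_eq hB h2 k hm
    rw [hcol] at hsplitB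
    have hsplitC : #((prefixClass C k m).filter (C k ⟨m, hm⟩ < C · ⟨m, hm⟩))
        ≤ #{i | k ≤ i ∧ C k ⟨m, hm⟩ < C i ⟨m, hm⟩} :=
      card_le_card fun i hi => by
        simp only [Finset.mem_filter, Finset.mem_univ, true_and] at hi ⊢
        exact ⟨(mem_prefixClass.mp hi.1).1, hi.2⟩
    have hcount := hs.card_filter_from_eq hrows ⟨m, hm⟩ (C k ⟨m, hm⟩ < ·)
    rw [hcol] at hBsucc
    rw [← hsplitB] at hcount
    omega

theorem not_tabGT_of_lexPrefixAntitone (hB : SemiStandard B) (h2 : LexPrefixAntitone B)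
    {C : Fin p → Fin n → ℕ+} (hC : SemiStandard C) (hs : suppEq C B) : ¬ tabGT B C := by
  rintro ⟨k, hrows, ⟨m, hm⟩, hcols, hlt⟩
  have hle := card_prefixClass_le hB h2 hC hs hrows hm.le fun l hl => hcols l hl
  have hCclass : #(prefixClass C k m) ≤ #{i | k ≤ i ∧ C k ⟨m, hm⟩ ≤ C i ⟨m, hm⟩} :=
    card_le_card fun i hi => by
      obtain ⟨hki, hpre⟩ := mem_prefixClass.mp hi
      simpa only [Finset.mem_filter, Finset.mem_univ, true_and] using ⟨hki,
        semiStandard_iff_forall_apply_le.mp hC k i ⟨m, hm⟩ hki fun t ht => (hpre t ht).symm⟩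
  have hcount := hs.card_filter_from_eq hrows ⟨m, hm⟩ (C k ⟨m, hm⟩ ≤ ·)
  have hBgt : #{i | k ≤ i ∧ C k ⟨m, hm⟩ ≤ B i ⟨m, hm⟩}
      ≤ #{i | k ≤ i ∧ B k ⟨m, hm⟩ < B i ⟨m, hm⟩} :=
    card_le_card fun i hi => by
      simp only [Finset.mem_filter, Finset.mem_univ, true_and] at hi ⊢
      exact ⟨hi.1, hlt.trans_le hi.2⟩
  have hBsucc := card_prefixClass_succ hB k hm
  rw [filter_prefixClass_lt_eq hB h2 k hm] at hBsucc
  have hk : 0 < #(prefixClass B k (m + 1)) :=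
    card_pos.mpr ⟨k, mem_prefixClass.mpr ⟨le_rfl, fun _ _ => rfl⟩⟩
  omega

theorem isStandard_of_lexPrefixAntitone (hB : SemiStandard B) (h2 : LexPrefixAntitone B) :
    IsStandard B := by
  refine ⟨hB, fun C hC hs hne => ?_⟩
  rcases tabGT_trichotomy C B with hCB | hCB | hBC
  exacts [hCB, absurd hCB hne, absurd hBC (not_tabGT_of_lexPrefixAntitone hB h2 hC hs)]

end LexPrefixAntitone

theorem semiStandard_of_firstColumn_eq {A B : Fin p → Fin n → ℕ+} (hA : SemiStandard A)
    (hcol1 : ∀ (h : 0 < n) (i : Fin p), B i ⟨0, h⟩ = A i ⟨0, h⟩)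
    (hcond3 : ∀ (i i' : Fin p) (j : ℕ) (hj : j + 1 < n),
      (∀ l : Fin n, (l : ℕ) ≤ j → B i l = B i' l) → i < i' →
      B i ⟨j + 1, hj⟩ ≤ B i' ⟨j + 1, hj⟩) :
    SemiStandard B := by
  refine semiStandard_iff_forall_apply_le.mpr fun i i' c hii hpre => ?_
  obtain ⟨_ | j, hc⟩ := c
  · rw [hcol1 hc, hcol1 hc]
    exact semiStandard_iff_forall_apply_le.mp hA i i' _ hii fun t ht => (Nat.not_lt_zero _ ht).elim
  · rcases hii.eq_or_lt with rfl | hlt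
    · exact le_rfl
    · exact hcond3 i i' j hc (fun l hl => hpre l (Fin.lt_def.mpr (Nat.lt_succ_of_le hl))) hlt

end Tableau

theorem stmt15 {p n : ℕ} (A B : Fin p → Fin n → ℕ+)
    (hA : SemiStandard A)
    (hsupp : suppEq B A)
    (hcol1 : ∀ (h : 0 < n) (i : Fin p), B i ⟨0, h⟩ = A i ⟨0, h⟩)
    (hcond2 : ∀ (i i' : Fin p) (j : ℕ) (hj : j + 1 < n),
      (∃ k : Fin n, (k : ℕ) ≤ j ∧ (∀ l : Fin n, l < k → B i l = B i' l) ∧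
        B i k < B i' k) →
      B i' ⟨j + 1, hj⟩ ≤ B i ⟨j + 1, hj⟩)
    (hcond3 : ∀ (i i' : Fin p) (j : ℕ) (hj : j + 1 < n),
      (∀ l : Fin n, (l : ℕ) ≤ j → B i l = B i' l) → i < i' →
      B i ⟨j + 1, hj⟩ ≤ B i' ⟨j + 1, hj⟩) :
    IsStandard B ∧ suppEq B A :=
  have hB : SemiStandard B := semiStandard_of_firstColumn_eq hA hcol1 hcond3
  ⟨isStandard_of_lexPrefixAntitone hB hcond2, hsupp⟩
end
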